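/- Let Q = (q_n) be a basic sequence satisfying lim_{N→∞} (1/N) ∑_{n=1}^N 1/q_n = 0, and suppose x = E_0.E_1E_2… w.r.t. Q is Q-distribution normal. If y = F_0.F_1F_2… w.r.t. Q satisfies lim_{n→∞} |E_n − F_n|/q_n = 0, then y is Q-distribution normal. -/

import Mathlib

open Filter Finset MeasureTheory

noncomputable section
open scoped Classical

/-- `cantorProd q n = q 1 * q 2 * ... * q n` (empty product for `n = 0`). -/
def cantorProd (q : ℕ → ℕ) (n : ℕ) : ℕ := ∏ j ∈ Finset.Icc 1 n, q j

/-- `T_{Q,n}(x) = q_1 q_2 ⋯ q_n · x (mod 1)`. -/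
def TQ (q : ℕ → ℕ) (n : ℕ) (x : ℝ) : ℝ := Int.fract ((cantorProd q n : ℝ) * x)

/-- A basic sequence: `q n ≥ 2` for all `n ≥ 1`. -/
def BasicSeq (q : ℕ → ℕ) : Prop := ∀ n, 1 ≤ n → 2 ≤ q n

/-- `Q` is infinite in limit: `q n → ∞`. -/
def InfiniteInLimit (q : ℕ → ℕ) : Prop := Filter.Tendsto q Filter.atTop Filter.atTop

/-- `E` (indexed from 1) is the sequence of digits of the `Q`-Cantor series expansion of `x`:
`E n ∈ {0, …, q n − 1}`, `E n ≠ q n − 1` infinitely often, and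
`x = ⌊x⌋ + ∑_{n ≥ 1} E n / (q 1 ⋯ q n)`. -/
def IsCantorDigits (q : ℕ → ℕ) (E : ℕ → ℕ) (x : ℝ) : Prop :=
  (∀ n, 1 ≤ n → E n < q n) ∧
  {n | 1 ≤ n ∧ E n ≠ q n - 1}.Infinite ∧
  x = (⌊x⌋ : ℝ) + ∑' n : ℕ, (E (n + 1) : ℝ) / (cantorProd q (n + 1) : ℝ)

/-- `Q_n^{(k)} = ∑_{j=1}^n 1/(q_j q_{j+1} ⋯ q_{j+k-1})`. -/
def Qnk (q : ℕ → ℕ) (k n : ℕ) : ℝ :=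
  ∑ j ∈ Finset.Icc 1 n, 1 / ∏ i ∈ Finset.Ico j (j + k), (q i : ℝ)

/-- `Q` is `k`-divergent. -/
def KDivergent (q : ℕ → ℕ) (k : ℕ) : Prop :=
  Filter.Tendsto (fun n => Qnk q k n) Filter.atTop Filter.atTop

/-- `N_n^Q(B, x)`: the number of indices `1 ≤ i ≤ n - |B| + 1` at which the block `B`
occurs in the digit sequence `E`. -/
def blockCount (E : ℕ → ℕ) (B : List ℕ) (n : ℕ) : ℕ :=
  ((Finset.Icc 1 (n + 1 - B.length)).filter
    (fun i => ∀ t, t < B.length → E (i + t) = B.getD t 0)).card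

/-- The digit sequence `E` is `Q`-normal of order `k`. -/
def QNormalOfOrder (q : ℕ → ℕ) (E : ℕ → ℕ) (k : ℕ) : Prop :=
  ∀ B : List ℕ, B.length = k →
    Filter.Tendsto (fun n => (blockCount E B n : ℝ) / Qnk q k n) Filter.atTop (nhds 1)

/-- A sequence (indexed from 0) is uniformly distributed mod 1. -/
def UDMod1 (z : ℕ → ℝ) : Prop :=
  ∀ a b : ℝ, 0 ≤ a → a < b → b ≤ 1 →
    Filter.Tendsto
      (fun N => (((Finset.range N).filter (fun n => Int.fract (z n) ∈ Set.Ico a b)).card : ℝ) / N)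
      Filter.atTop (nhds (b - a))

/-- `x` is `Q`-distribution normal: `(T_{Q,n}(x))_{n ≥ 0}` is uniformly distributed mod 1. -/
def QDistNormal (q : ℕ → ℕ) (x : ℝ) : Prop := UDMod1 (fun n => TQ q n x)

/-- A set of natural numbers has (natural) density zero. -/
def DensityZero (A : Set ℕ) : Prop :=
  Filter.Tendsto (fun N => (((Finset.Icc 1 N).filter (fun n => n ∈ A)).card : ℝ) / N)
    Filter.atTop (nhds 0)

/-- The `n`-th digit (for `n ≥ 1`) of the `Q`-Cantor series expansion of `x`,
extracted via `E_n = ⌊q_n · T_{Q,n-1}(x)⌋`. -/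
def cantorDigit (q : ℕ → ℕ) (x : ℝ) (n : ℕ) : ℤ := ⌊(q n : ℝ) * TQ q (n - 1) x⌋

/-- `ψ_{P,Q}(x) = ∑_{n ≥ 1} min(E_n, q_n − 1)/(q_1 ⋯ q_n)`, where `E` are the `P`-digits of `x`. -/
def psiMap (p q : ℕ → ℕ) (x : ℝ) : ℝ :=
  ∑' n : ℕ, ((min (cantorDigit p x (n + 1)) ((q (n + 1) : ℤ) - 1) : ℤ) : ℝ) /
    (cantorProd q (n + 1) : ℝ)

/-- `N_n^Q(B, x)` defined via the canonical digits of the real number `x`. -/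
def blockCountReal (q : ℕ → ℕ) (x : ℝ) (B : List ℕ) (n : ℕ) : ℕ :=
  ((Finset.Icc 1 (n + 1 - B.length)).filter
    (fun i => ∀ t, t < B.length → cantorDigit q x (i + t) = (B.getD t 0 : ℤ))).card

/-- The real number `x` is `Q`-normal of order `k`. -/
def QNormalOfOrderReal (q : ℕ → ℕ) (x : ℝ) (k : ℕ) : Prop :=
  ∀ B : List ℕ, B.length = k →
    Filter.Tendsto (fun n => (blockCountReal q x B n : ℝ) / Qnk q k n) Filter.atTop (nhds 1)

/-- The discrepancy `D_N` of the finite sequence `x 1, …, x N` (of numbers in `[0,1)`). -/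
def discrepancy (N : ℕ) (x : ℕ → ℝ) : ℝ :=
  sSup {d : ℝ | ∃ a b : ℝ, 0 ≤ a ∧ a ≤ b ∧ b ≤ 1 ∧
    d = |(((Finset.Icc 1 N).filter (fun n => x n ∈ Set.Ico a b)).card : ℝ) / N - (b - a)|}


/-!
`T_{Q,n}(x)` is the number `t_n = 0.E_{n+1}E_{n+2}…` with respect to the shifted basic sequence
`(q_{n+1}, q_{n+2}, …)`: it lies in `[0, 1)` and satisfies `t_n = (E_{n+1} + t_{n+1}) / q_{n+1}`.
Hence `|T_{Q,n}(x) - T_{Q,n}(y)| ≤ (|E_{n+1} - F_{n+1}| + 1) / q_{n+1}`, and the Cesàro means of the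
right-hand side tend to `0` by the two hypotheses. Uniform distribution survives such perturbations:
for fixed `t > 0` the indices where the perturbation exceeds `t` have density zero, and off them the
count in `[a, b)` is squeezed between the counts of the unperturbed sequence in `[a + t, b - t)` and
in `[a - t, b + t)`.
-/

open Topology

lemma cantorProd_succ (q : ℕ → ℕ) (n : ℕ) : cantorProd q (n + 1) = cantorProd q n * q (n + 1) :=
  prod_Icc_succ_top (by omega) q

lemma cantorProd_pos {q : ℕ → ℕ} (hq : ∀ n, 1 ≤ n → 0 < q n) (n : ℕ) : 0 < cantorProd q n :=
  prod_pos fun i hi => hq i (mem_Icc.mp hi).1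

lemma cantorProd_dvd_cantorProd (q : ℕ → ℕ) {k n : ℕ} (hkn : k ≤ n) :
    cantorProd q k ∣ cantorProd q n :=
  prod_dvd_prod_of_subset _ _ _ (Icc_subset_Icc_right hkn)

section CantorTail

variable {q E : ℕ → ℕ}

/-- The number `0.E_{n+1}E_{n+2}…` with respect to the shifted basic sequence
`(q_{n+1}, q_{n+2}, …)`. -/
def cantorTail (q E : ℕ → ℕ) (n : ℕ) : ℝ :=
  cantorProd q n * ∑' m, (E (m + n + 1) : ℝ) / cantorProd q (m + n + 1)

lemma digit_div_cantorProd_le (hE : ∀ n, 1 ≤ n → E n < q n) (k : ℕ) :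
    (E (k + 1) : ℝ) / cantorProd q (k + 1) ≤
      1 / cantorProd q k - 1 / cantorProd q (k + 1) := by
  have hP : (0 : ℝ) < cantorProd q k :=
    mod_cast cantorProd_pos (fun n hn => Nat.zero_lt_of_lt (hE n hn)) k
  have hq : (0 : ℝ) < q (k + 1) := mod_cast Nat.zero_lt_of_lt (hE (k + 1) (by omega))
  have hEq : (E (k + 1) : ℝ) + 1 ≤ q (k + 1) := mod_cast hE (k + 1) (by omega)
  rw [cantorProd_succ, Nat.cast_mul,
    show 1 / (cantorProd q k : ℝ) - 1 / (cantorProd q k * q (k + 1)) =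
      (q (k + 1) - 1) / (cantorProd q k * q (k + 1)) by field_simp]
  gcongr
  linarith

lemma sum_range_digit_div_cantorProd_le (hE : ∀ n, 1 ≤ n → E n < q n) (n M : ℕ) :
    ∑ m ∈ range M, (E (m + n + 1) : ℝ) / cantorProd q (m + n + 1) ≤ 1 / cantorProd q n := by
  calc ∑ m ∈ range M, (E (m + n + 1) : ℝ) / cantorProd q (m + n + 1)
      ≤ ∑ m ∈ range M, (1 / (cantorProd q (m + n) : ℝ) - 1 / cantorProd q (m + 1 + n)) := by
        refine sum_le_sum fun m _ => ?_
        rw [add_right_comm m 1 n]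
        exact digit_div_cantorProd_le hE (m + n)
    _ = 1 / cantorProd q n - 1 / cantorProd q (M + n) := by
        rw [sum_range_sub' (fun m => 1 / (cantorProd q (m + n) : ℝ)), zero_add]
    _ ≤ 1 / cantorProd q n := sub_le_self _ (by positivity)

lemma summable_digit_div_cantorProd (hE : ∀ n, 1 ≤ n → E n < q n) (n : ℕ) :
    Summable fun m => (E (m + n + 1) : ℝ) / cantorProd q (m + n + 1) :=
  summable_of_sum_range_le (fun _ => by positivity) (sum_range_digit_div_cantorProd_le hE n)

lemma cantorTail_nonneg (n : ℕ) : 0 ≤ cantorTail q E n :=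
  mul_nonneg (Nat.cast_nonneg _) (tsum_nonneg fun _ => by positivity)

lemma cantorTail_le_one (hE : ∀ n, 1 ≤ n → E n < q n) (n : ℕ) : cantorTail q E n ≤ 1 := by
  have hP : (0 : ℝ) < cantorProd q n :=
    mod_cast cantorProd_pos (fun n hn => Nat.zero_lt_of_lt (hE n hn)) n
  calc cantorTail q E n ≤ cantorProd q n * (1 / cantorProd q n) :=
        mul_le_mul_of_nonneg_left (Real.tsum_le_of_sum_range_le (fun _ => by positivity)
          (sum_range_digit_div_cantorProd_le hE n)) hP.le
    _ = 1 := mul_one_div_cancel hP.ne'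

lemma cantorTail_eq_div (hE : ∀ n, 1 ≤ n → E n < q n) (n : ℕ) :
    cantorTail q E n = (E (n + 1) + cantorTail q E (n + 1)) / q (n + 1) := by
  have hP : (0 : ℝ) < cantorProd q n :=
    mod_cast cantorProd_pos (fun n hn => Nat.zero_lt_of_lt (hE n hn)) n
  have hq : (0 : ℝ) < q (n + 1) := mod_cast Nat.zero_lt_of_lt (hE (n + 1) (by omega))
  rw [cantorTail, (summable_digit_div_cantorProd hE n).tsum_eq_zero_add, cantorTail, zero_add]
  simp only [add_right_comm _ 1 n, ← add_assoc]
  rw [cantorProd_succ q n, Nat.cast_mul]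
  field_simp

lemma cantorTail_lt_one_of_lt_of_ne (hE : ∀ n, 1 ≤ n → E n < q n) {n k : ℕ} (hnk : n < k)
    (hk : E k ≠ q k - 1) : cantorTail q E n < 1 := by
  obtain ⟨d, rfl⟩ : ∃ d, k = n + d + 1 := ⟨k - n - 1, by omega⟩
  induction d generalizing n with
  | zero =>
    rw [add_zero] at hk
    have hEq : (E (n + 1) : ℝ) + 2 ≤ q (n + 1) := by
      have := hE (n + 1) (by omega)
      exact_mod_cast (show E (n + 1) + 2 ≤ q (n + 1) by omega)
    rw [cantorTail_eq_div hE, div_lt_one (by linarith)]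
    linarith [cantorTail_le_one hE (n + 1)]
  | succ d ih =>
    have hEq : (E (n + 1) : ℝ) + 1 ≤ q (n + 1) := mod_cast hE (n + 1) (by omega)
    rw [cantorTail_eq_div hE, div_lt_one (by linarith)]
    linarith [ih (n := n + 1) (by omega) (by rwa [add_right_comm n 1 d])]

lemma cantorTail_lt_one (hE : ∀ n, 1 ≤ n → E n < q n)
    (hinf : {n | 1 ≤ n ∧ E n ≠ q n - 1}.Infinite) (n : ℕ) : cantorTail q E n < 1 := by
  obtain ⟨k, ⟨-, hk⟩, hnk⟩ := hinf.exists_gt n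
  exact cantorTail_lt_one_of_lt_of_ne hE hnk hk

lemma exists_cantorProd_mul_sum_range_digit_div_eq_natCast (hE : ∀ n, 1 ≤ n → E n < q n)
    (n : ℕ) : ∃ z : ℕ,
      (cantorProd q n : ℝ) * ∑ k ∈ range n, (E (k + 1) : ℝ) / cantorProd q (k + 1) = z := by
  refine ⟨∑ k ∈ range n, E (k + 1) * (cantorProd q n / cantorProd q (k + 1)), ?_⟩
  push_cast
  rw [mul_sum]
  refine sum_congr rfl fun k hk => ?_
  have hP : (cantorProd q (k + 1) : ℝ) ≠ 0 :=
    mod_cast (cantorProd_pos (fun n hn => Nat.zero_lt_of_lt (hE n hn)) (k + 1)).ne'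
  rw [Nat.cast_div (cantorProd_dvd_cantorProd q (mem_range.mp hk)) hP]
  ring

theorem TQ_eq_cantorTail {x : ℝ} (hx : IsCantorDigits q E x) (n : ℕ) :
    TQ q n x = cantorTail q E n := by
  obtain ⟨hE, hinf, hx⟩ := hx
  have hsum : Summable fun k => (E (k + 1) : ℝ) / cantorProd q (k + 1) := by
    simpa using summable_digit_div_cantorProd hE 0
  obtain ⟨z, hz⟩ := exists_cantorProd_mul_sum_range_digit_div_eq_natCast hE n
  have hsplit :
      (cantorProd q n : ℝ) * x = ((cantorProd q n * ⌊x⌋ + z : ℤ) : ℝ) + cantorTail q E n := by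
    conv_lhs => rw [hx, ← hsum.sum_add_tsum_nat_add n, mul_add, mul_add, hz]
    push_cast
    rw [cantorTail]
    ring
  rw [TQ, hsplit, Int.fract_intCast_add,
    Int.fract_eq_self.mpr ⟨cantorTail_nonneg n, cantorTail_lt_one hE hinf n⟩]

lemma abs_cantorTail_sub_le {F : ℕ → ℕ} (hE : ∀ n, 1 ≤ n → E n < q n)
    (hF : ∀ n, 1 ≤ n → F n < q n) (n : ℕ) :
    |cantorTail q E n - cantorTail q F n| ≤ (|(E (n + 1) : ℝ) - F (n + 1)| + 1) / q (n + 1) := by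
  have hq : (0 : ℝ) < q (n + 1) := mod_cast Nat.zero_lt_of_lt (hE (n + 1) (by omega))
  rw [cantorTail_eq_div hE, cantorTail_eq_div hF, ← sub_div, abs_div, abs_of_pos hq]
  gcongr
  rw [abs_le]
  constructor <;> linarith [le_abs_self ((E (n + 1) : ℝ) - F (n + 1)),
    neg_abs_le ((E (n + 1) : ℝ) - F (n + 1)), cantorTail_nonneg (q := q) (E := E) (n + 1),
    cantorTail_nonneg (q := q) (E := F) (n + 1), cantorTail_le_one hE (n + 1),
    cantorTail_le_one hF (n + 1)]

end CantorTail

section UniformDistribution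

lemma tendsto_card_filter_lt_div_atTop_zero {δ : ℕ → ℝ} (hδ₀ : ∀ n, 0 ≤ δ n)
    (hδ : Tendsto (fun N : ℕ => (∑ n ∈ range N, δ n) / N) atTop (𝓝 0)) {t : ℝ} (ht : 0 < t) :
    Tendsto (fun N : ℕ => (#{n ∈ range N | t < δ n} : ℝ) / N) atTop (𝓝 0) := by
  refine squeeze_zero (fun _ => by positivity) (fun N => ?_) (by simpa using hδ.div_const t)
  have hcard : (#{n ∈ range N | t < δ n} : ℝ) * t ≤ ∑ n ∈ range N, δ n := by
    rw [← nsmul_eq_mul]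
    exact (card_nsmul_le_sum _ _ _ fun n hn => (mem_filter.mp hn).2.le).trans
      (sum_le_sum_of_subset_of_nonneg (filter_subset _ _) fun n _ _ => hδ₀ n)
  rw [le_div_iff₀ ht, div_mul_eq_mul_div]
  exact div_le_div_of_nonneg_right hcard (Nat.cast_nonneg N)

lemma card_filter_div_le_add {u v δ : ℕ → ℝ} {S T : Set ℝ} {t : ℝ}
    [DecidablePred fun n => u n ∈ S] [DecidablePred fun n => v n ∈ T]
    (h : ∀ n, δ n ≤ t → u n ∈ S → v n ∈ T) (N : ℕ) :
    (#{n ∈ range N | u n ∈ S} : ℝ) / N ≤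
      #{n ∈ range N | v n ∈ T} / N + #{n ∈ range N | t < δ n} / N := by
  rw [← add_div]
  refine div_le_div_of_nonneg_right ?_ (Nat.cast_nonneg N)
  have hsub : {n ∈ range N | u n ∈ S} ⊆ {n ∈ range N | v n ∈ T} ∪ {n ∈ range N | t < δ n} := by
    intro n hn
    simp only [mem_union, mem_filter] at hn ⊢
    by_cases hδn : δ n ≤ t
    · exact Or.inl ⟨hn.1, h n hδn hn.2⟩
    · exact Or.inr ⟨hn.1, not_le.mp hδn⟩
  exact_mod_cast (card_le_card hsub).trans (card_union_le _ _)

theorem UDMod1.of_abs_fract_sub_le {z w δ : ℕ → ℝ} (hz : UDMod1 z)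
    (hzw : ∀ n, |Int.fract (z n) - Int.fract (w n)| ≤ δ n)
    (hδ : Tendsto (fun N : ℕ => (∑ n ∈ range N, δ n) / N) atTop (𝓝 0)) : UDMod1 w := by
  intro a b ha hab hb
  have hbad : ∀ t > 0, ∀ᶠ N : ℕ in atTop, (#{n ∈ range N | t < δ n} : ℝ) / N < t := fun t ht =>
    (tendsto_card_filter_lt_div_atTop_zero (fun n => (abs_nonneg _).trans (hzw n)) hδ ht)
      |>.eventually_lt_const ht
  refine tendsto_order.2 ⟨fun c hc => ?_, fun c hc => ?_⟩
  · set t := min ((b - a - c) / 4) ((b - a) / 4)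
    have ht : 0 < t := lt_min (by linarith) (by linarith)
    have htc : t ≤ (b - a - c) / 4 := min_le_left _ _
    have htab : t ≤ (b - a) / 4 := min_le_right _ _
    have hfreq := (hz (a + t) (b - t) (by linarith) (by linarith) (by linarith))
      |>.eventually_const_lt (show c + t < b - t - (a + t) by linarith)
    filter_upwards [hfreq, hbad t ht] with N hN hNbad
    have := card_filter_div_le_add (u := fun n => Int.fract (z n)) (v := fun n => Int.fract (w n))
      (S := Set.Ico (a + t) (b - t)) (T := Set.Ico a b) (t := t) (fun n hδn hn => by
        have := abs_le.mp ((hzw n).trans hδn)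
        exact ⟨by linarith [hn.1], by linarith [hn.2]⟩) N
    linarith
  · set t := (c - (b - a)) / 4 with ht_def
    have ht : 0 < t := by linarith
    set a' := max (a - t) 0
    set b' := min (b + t) 1
    have hwidth : b' - a' ≤ b - a + 2 * t := by
      linarith [le_max_left (a - t) 0, min_le_left (b + t) 1]
    have hfreq := (hz a' b' (le_max_right _ _)
      ((max_le (by linarith) ha).trans_lt (hab.trans_le (le_min (by linarith) hb)))
      (min_le_right _ _)).eventually_lt_const (show b' - a' < b' - a' + t by linarith)
    filter_upwards [hfreq, hbad t ht] with N hN hNbad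
    have := card_filter_div_le_add (u := fun n => Int.fract (w n)) (v := fun n => Int.fract (z n))
      (S := Set.Ico a b) (T := Set.Ico a' b') (t := t) (fun n hδn hn => by
        have := abs_le.mp ((hzw n).trans hδn)
        exact ⟨max_le (by linarith [hn.1]) (Int.fract_nonneg _),
          lt_min (by linarith [hn.2]) (Int.fract_lt_one _)⟩) N
    linarith

end UniformDistribution

theorem stmt_2_general (q : ℕ → ℕ)
    (hQ : Filter.Tendsto (fun N : ℕ => (1 / (N : ℝ)) * ∑ n ∈ Finset.Icc 1 N, 1 / (q n : ℝ))
      Filter.atTop (nhds 0))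
    (x y : ℝ) (E F : ℕ → ℕ)
    (hE : IsCantorDigits q E x) (hF : IsCantorDigits q F y)
    (hx : QDistNormal q x)
    (h : Filter.Tendsto (fun n => |(E n : ℝ) - (F n : ℝ)| / (q n : ℝ)) Filter.atTop (nhds 0)) :
    QDistNormal q y := by
  refine UDMod1.of_abs_fract_sub_le hx (fun n => ?_) (δ := fun n =>
    |(E (n + 1) : ℝ) - F (n + 1)| / q (n + 1) + 1 / q (n + 1)) ?_
  · have hfract : ∀ v, Int.fract (TQ q n v) = TQ q n v := fun v => Int.fract_fract _
    rw [hfract, hfract, TQ_eq_cantorTail hE, TQ_eq_cantorTail hF, ← add_div]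
    exact abs_cantorTail_sub_le hE.1 hF.1 n
  · have hshift : ∀ N, ∑ n ∈ Icc 1 N, 1 / (q n : ℝ) = ∑ n ∈ range N, 1 / (q (n + 1) : ℝ) :=
      fun N => by rw [range_eq_Ico, sum_Ico_add' (fun n => 1 / (q n : ℝ)), zero_add,
        Ico_add_one_right_eq_Icc]
    simp only [hshift] at hQ
    simpa [sum_add_distrib, div_eq_inv_mul, mul_add] using
      (h.comp (tendsto_add_atTop_nat 1)).cesaro.add hQ

theorem stmt_2 (q : ℕ → ℕ) (hq : BasicSeq q)
    (hQ : Filter.Tendsto (fun N : ℕ => (1 / (N : ℝ)) * ∑ n ∈ Finset.Icc 1 N, 1 / (q n : ℝ))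
      Filter.atTop (nhds 0))
    (x y : ℝ) (E F : ℕ → ℕ)
    (hE : IsCantorDigits q E x) (hF : IsCantorDigits q F y)
    (hx : QDistNormal q x)
    (h : Filter.Tendsto (fun n => |(E n : ℝ) - (F n : ℝ)| / (q n : ℝ)) Filter.atTop (nhds 0)) :
    QDistNormal q y :=
  stmt_2_general q hQ x y E F hE hF hx h
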